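/- Soundness of the parallel congruence rule (PCSub): if R_f(P) = R_f(Q), then R_f(P | R) = R_f(Q | R); consequently, if ⟨P⟩p ↔ ⟨Q⟩p is valid then ⟨P|R⟩p ↔ ⟨Q|R⟩p is valid. -/

import Mathlib

/-- Running actions of XCCS over names `N`: input, output and the silent action. -/
inductive RAct (N : Type)
  | inp : N → RAct N
  | out : N → RAct N
  | tau : RAct N

/-- Complementary running actions. -/
def RAct.co {N : Type} : RAct N → RAct N → Prop := fun a b =>
  (∃ n, a = .inp n ∧ b = .out n) ∨ (∃ n, a = .out n ∧ b = .inp n)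

/-- XCCS actions: running actions together with the ending action `END`. -/
inductive XAct (N : Type)
  | run : RAct N → XAct N
  | END : XAct N

/-- XCCS process terms: the null process `0`, `END`, action prefix, sequential
composition, nondeterministic choice, parallel composition, iteration and
restriction. -/
inductive XP (N : Type)
  | zero : XP N
  | endp : XP N
  | pre : RAct N → XP N → XP N
  | seq : XP N → XP N → XP N
  | choice : XP N → XP N → XP N
  | par : XP N → XP N → XP N
  | star : XP N → XP N
  | res : Set N → XP N → XP N

/-- A running action is allowed through the restriction `\L` if it is `τ` or an
input/output on a channel not in `L`. -/
def allowed {N : Type} (L : Set N) : RAct N → Prop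
  | .inp a => a ∉ L
  | .out a => a ∉ L
  | .tau => True

mutual
/-- `XTm P` means `P →END ✓`: `P` can successfully finish. -/
inductive XTm {N : Type} : XP N → Prop
  | endp : XTm .endp
  | star {P : XP N} : XTm (.star P)
  | seq {P Q : XP N} : XTm P → XTm Q → XTm (.seq P Q)
  | choiceL {P Q : XP N} : XTm P → XTm (.choice P Q)
  | choiceR {P Q : XP N} : XTm Q → XTm (.choice P Q)
  | par {P Q : XP N} : XTm P → XTm Q → XTm (.par P Q)
  | res {L : Set N} {P : XP N} : XTm P → XTm (.res L P)

/-- Transitions `P →α P'` of XCCS for running actions `α`. -/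
inductive XTr {N : Type} : XP N → RAct N → XP N → Prop
  | pre {α : RAct N} {P : XP N} : XTr (.pre α P) α P
  | seqL {P P' Q : XP N} {α} : XTr P α P' → XTr (.seq P Q) α (.seq P' Q)
  | seqEnd {P Q Q' : XP N} {α} : XTm P → XTr Q α Q' → XTr (.seq P Q) α Q'
  | choiceL {P Q P' : XP N} {α} : XTr P α P' → XTr (.choice P Q) α P'
  | choiceR {P Q Q' : XP N} {α} : XTr Q α Q' → XTr (.choice P Q) α Q'
  | parL {P Q P' : XP N} {α} : XTr P α P' → XTr (.par P Q) α (.par P' Q)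
  | parR {P Q Q' : XP N} {α} : XTr Q α Q' → XTr (.par P Q) α (.par P Q')
  | sync {P Q P' Q' : XP N} {a b : RAct N} :
      RAct.co a b → XTr P a P' → XTr Q b Q' → XTr (.par P Q) (.tau) (.par P' Q')
  | star {P P' : XP N} {α} : XTr P α P' → XTr (.star P) α (.seq P' (.star P))
  | res {L : Set N} {P P' : XP N} {α} :
      XTr P α P' → allowed L α → XTr (.res L P) α (.res L P')
end

/-- `XRun P l` means `P ⇒l ✓`: `P` performs the sequence `l` (which necessarily
ends with `END`) and successfully finishes. -/
inductive XRun {N : Type} : XP N → List (XAct N) → Prop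
  | done {P : XP N} : XTm P → XRun P [.END]
  | cons {P P' : XP N} {α : RAct N} {l : List (XAct N)} :
      XTr P α P' → XRun P' l → XRun P (.run α :: l)

/-- The set of finite possible runs of an XCCS process. -/
def XRf {N : Type} (P : XP N) : Set (List (XAct N)) :=
  { l | XRun P l }

/-- `♮`: remove a trailing `END` from a sequence, if present. -/
def natl {N : Type} : List (XAct N) → List (XAct N)
  | [] => []
  | [XAct.END] => []
  | [a] => [a]
  | a :: l => a :: natl l

/-- `END`-absorbing concatenation of sets of sequences. -/
def xconc {N : Type} (R S : Set (List (XAct N))) : Set (List (XAct N)) :=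
  { l | ∃ a ∈ R, ∃ b ∈ S, l = natl a ++ b }

/-- Powers with respect to `♮`-concatenation; `R⁰ = {END}`, the identity for `∘`. -/
def xpow {N : Type} (R : Set (List (XAct N))) : ℕ → Set (List (XAct N))
  | 0 => {[XAct.END]}
  | n + 1 => xconc R (xpow R n)

/-- Kleene star with respect to `♮`-concatenation. -/
def xstar {N : Type} (R : Set (List (XAct N))) : Set (List (XAct N)) :=
  ⋃ n : ℕ, xpow R n

/-- Paths in a frame matched by a nonempty sequence of actions. -/
inductive Matches {W A : Type} (R : A → W → W → Prop) : W → List A → W → Prop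
  | single {w v : W} {α : A} : R α w v → Matches R w [α] v
  | cons {w u v : W} {α : A} {l : List A} :
      R α w u → Matches R u l v → Matches R w (α :: l) v

/-- Satisfaction of `⟨P⟩p` at `w` via the finite runs `Rset` of `P`. -/
def DiaSat {W A : Type} (R : A → W → W → Prop) (Rset : Set (List A))
    (V : Set W) (w : W) : Prop :=
  ∃ (l : List A) (v : W), l ∈ Rset ∧ Matches R w l v ∧ v ∈ V

/-- Validity of `⟨P⟩p ↔ ⟨Q⟩p` in all XCCS-PDL models: all frames interpret `END`
as the identity relation. -/
def XValidIff {N : Type} (P Q : XP N) : Prop :=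
  ∀ (W : Type) (_ : Nonempty W) (R : XAct N → W → W → Prop),
    (∀ w v : W, R XAct.END w v ↔ w = v) →
    ∀ (V : Set W) (w : W),
      DiaSat R (XRf P) V w ↔ DiaSat R (XRf Q) V w

/-!
A finishing run of `P | R` projects onto a finishing run of each component, and it is one of
the interleavings-with-synchronisation of these two runs; conversely every such interleaving of
runs of `P` and `R` is a run of `P | R`. Hence `R_f(P | R)` is determined by `R_f(P)` and
`R_f(R)`. For the modal part, validity of `⟨P⟩p ↔ ⟨Q⟩p` already forces `R_f(P) = R_f(Q)`:
in the frame on lists of running actions where each action consumes itself from the front of the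
list and `END` is the identity, the run `α⃗ END` is detected at the state `α⃗` by `⟨P⟩` with
`p` true only at the empty list.
-/

/-- The paper's `α⃗ | β⃗`, as the relation `RunMerge α⃗ β⃗ l`. -/
inductive RunMerge {N : Type} : List (XAct N) → List (XAct N) → List (XAct N) → Prop
  | done : RunMerge [.END] [.END] [.END]
  | left {α lp lr l} : RunMerge lp lr l → RunMerge (.run α :: lp) lr (.run α :: l)
  | right {α lp lr l} : RunMerge lp lr l → RunMerge lp (.run α :: lr) (.run α :: l)
  | sync {a b lp lr l} : RAct.co a b → RunMerge lp lr l →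
      RunMerge (.run a :: lp) (.run b :: lr) (.run .tau :: l)

section Parallel

variable {N : Type} {P R : XP N} {l : List (XAct N)}

theorem XRun.exists_runMerge_of_par (h : XRun (.par P R) l) :
    ∃ lp lr, XRun P lp ∧ XRun R lr ∧ RunMerge lp lr l := by
  generalize hS : XP.par P R = S at h
  induction h generalizing P R with
  | done htm =>
    subst hS
    cases htm with
    | par hP hR => exact ⟨_, _, .done hP, .done hR, .done⟩
  | cons htr _ ih =>
    subst hS
    cases htr with
    | parL hP =>
      obtain ⟨lp, lr, hp, hr, hm⟩ := ih rfl
      exact ⟨_, _, .cons hP hp, hr, .left hm⟩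
    | parR hR =>
      obtain ⟨lp, lr, hp, hr, hm⟩ := ih rfl
      exact ⟨_, _, hp, .cons hR hr, .right hm⟩
    | sync hco hP hR =>
      obtain ⟨lp, lr, hp, hr, hm⟩ := ih rfl
      exact ⟨_, _, .cons hP hp, .cons hR hr, .sync hco hm⟩

theorem RunMerge.xRun_par {lp lr : List (XAct N)} (hm : RunMerge lp lr l)
    (hp : XRun P lp) (hr : XRun R lr) : XRun (.par P R) l := by
  induction hm generalizing P R with
  | done =>
    cases hp with
    | done hP => cases hr with
      | done hR => exact .done (.par hP hR)
  | left _ ih =>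
    cases hp with
    | cons hP hp' => exact .cons (.parL hP) (ih hp' hr)
  | right _ ih =>
    cases hr with
    | cons hR hr' => exact .cons (.parR hR) (ih hp hr')
  | sync hco _ ih =>
    cases hp with
    | cons hP hp' => cases hr with
      | cons hR hr' => exact .cons (.sync hco hP hR) (ih hp' hr')

theorem xRf_par (P R : XP N) :
    XRf (.par P R) = {l | ∃ lp ∈ XRf P, ∃ lr ∈ XRf R, RunMerge lp lr l} := by
  ext l
  constructor
  · intro h
    obtain ⟨lp, lr, hp, hr, hm⟩ := XRun.exists_runMerge_of_par h
    exact ⟨lp, hp, lr, hr, hm⟩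
  · rintro ⟨lp, hp, lr, hr, hm⟩
    exact hm.xRun_par hp hr

end Parallel

section CanonicalFrame

variable {N : Type}

theorem XRun.exists_eq_map_run {P : XP N} {l : List (XAct N)} (h : XRun P l) :
    ∃ αs : List (RAct N), l = αs.map .run ++ [.END] := by
  induction h with
  | done _ => exact ⟨[], rfl⟩
  | cons _ _ ih =>
    obtain ⟨αs, rfl⟩ := ih
    exact ⟨_ :: αs, rfl⟩

def consumeRel : XAct N → List (RAct N) → List (RAct N) → Prop
  | .run α, w, v => w = α :: v
  | .END, w, v => w = v

theorem consumeRel_END_iff (w v : List (RAct N)) : consumeRel .END w v ↔ w = v :=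
  Iff.rfl

theorem matches_consumeRel_iff (αs : List (RAct N)) (w v : List (RAct N)) :
    Matches consumeRel w (αs.map .run ++ [.END]) v ↔ w = αs ++ v := by
  induction αs generalizing w with
  | nil =>
    rw [List.map_nil, List.nil_append]
    constructor
    · rintro (h | ⟨_, h⟩)
      · exact h
      · cases h
    · exact fun h => .single h
  | cons α αs ih =>
    rw [List.map_cons, List.cons_append]
    constructor
    · intro hm
      generalize hl : αs.map XAct.run ++ [XAct.END] = l at hm
      cases hm with
      | single _ => simp at hl
      | cons h hm =>
        subst hl
        rw [show w = α :: _ from h, (ih _).1 hm, List.cons_append]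
    · rintro rfl
      exact .cons rfl ((ih _).2 rfl)

theorem diaSat_consumeRel_iff (P : XP N) (αs : List (RAct N)) :
    DiaSat consumeRel (XRf P) {[]} αs ↔ αs.map .run ++ [.END] ∈ XRf P := by
  constructor
  · rintro ⟨l, v, hl, hm, rfl⟩
    obtain ⟨βs, rfl⟩ := XRun.exists_eq_map_run hl
    rw [matches_consumeRel_iff, List.append_nil] at hm
    rwa [hm]
  · intro hl
    exact ⟨_, [], hl, (matches_consumeRel_iff _ _ _).2 (List.append_nil _).symm, rfl⟩

theorem xRf_eq_of_xValidIff {P Q : XP N} (h : XValidIff P Q) : XRf P = XRf Q := by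
  have key (αs : List (RAct N)) :
      αs.map .run ++ [.END] ∈ XRf P ↔ αs.map .run ++ [.END] ∈ XRf Q := by
    rw [← diaSat_consumeRel_iff, ← diaSat_consumeRel_iff]
    exact h _ ⟨[]⟩ _ consumeRel_END_iff _ _
  ext l
  constructor
  · intro hl
    obtain ⟨αs, rfl⟩ := XRun.exists_eq_map_run hl
    exact (key αs).1 hl
  · intro hl
    obtain ⟨αs, rfl⟩ := XRun.exists_eq_map_run hl
    exact (key αs).2 hl

end CanonicalFrame

theorem xValidIff_of_xRf_eq {N : Type} {P Q : XP N} (h : XRf P = XRf Q) : XValidIff P Q := by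
  intro _ _ _ _ _ _
  rw [h]

/-- Soundness of the parallel congruence rule (PCSub): if `R_f(P) = R_f(Q)` then
`R_f(P|R) = R_f(Q|R)`; consequently, if `⟨P⟩p ↔ ⟨Q⟩p` is valid then
`⟨P|R⟩p ↔ ⟨Q|R⟩p` is valid. -/
theorem pcsub_sound {N : Type} (P Q R : XP N) :
    (XRf P = XRf Q → XRf (XP.par P R) = XRf (XP.par Q R)) ∧
    (XValidIff P Q → XValidIff (XP.par P R) (XP.par Q R)) := by
  have hpar (h : XRf P = XRf Q) : XRf (XP.par P R) = XRf (XP.par Q R) := by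
    rw [xRf_par, xRf_par, h]
  exact ⟨hpar, fun hv => xValidIff_of_xRf_eq (hpar (xRf_eq_of_xValidIff hv))⟩
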